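/- For every δ ∈ (0,1) and every ξ ∈ Δ(K) it holds that |v_δ(ξ) − v_δ(ξM)| ≤ (1−δ)·‖u‖∞ / δ. -/

import Mathlib

open scoped BigOperators

noncomputable section

/-- A row-stochastic matrix: nonnegative entries, rows summing to 1. -/
def IsStochastic {K : Type*} [Fintype K] (M : Matrix K K ℝ) : Prop :=
  (∀ i j, 0 ≤ M i j) ∧ ∀ i, ∑ j, M i j = 1

/-- A split of `ξ`: a countable family of weights `α` and beliefs `ξs` with
`α s ≥ 0`, `ξs s ∈ Δ(K)`, `∑ α = 1` and `∑ α_s ξ_s = ξ`. -/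
def IsSplit {K : Type*} [Fintype K] (ξ : K → ℝ) (α : ℕ → ℝ) (ξs : ℕ → K → ℝ) : Prop :=
  (∀ s, 0 ≤ α s) ∧ (∀ s, ξs s ∈ stdSimplex ℝ K) ∧ (∑' s, α s) = 1 ∧
    ∀ ℓ : K, (∑' s, α s * ξs s ℓ) = ξ ℓ

/-- The one-stage payoff of a split in the δ-discounted Bellman equation. -/
def splitPayoff {K : Type*} [Fintype K] (M : Matrix K K ℝ) (u : (K → ℝ) → ℝ) (δ : ℝ)
    (w : (K → ℝ) → ℝ) (α : ℕ → ℝ) (ξs : ℕ → K → ℝ) : ℝ :=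
  ∑' s, α s * ((1 - δ) * u (ξs s) + δ * w (Matrix.vecMul (ξs s) M))

/-- `v` is the family of δ-discounted values of the Markovian persuasion game:
for each `δ ∈ [0,1)`, `v δ` is bounded between `0` and `C = ‖u‖∞` on `Δ(K)` and
satisfies the Bellman equation there. -/
def IsValueFamily {K : Type*} [Fintype K] (M : Matrix K K ℝ) (u : (K → ℝ) → ℝ) (C : ℝ)
    (v : ℝ → (K → ℝ) → ℝ) : Prop :=
  ∀ δ ∈ Set.Ico (0 : ℝ) 1,
    (∀ ξ ∈ stdSimplex ℝ K, 0 ≤ v δ ξ ∧ v δ ξ ≤ C) ∧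
    ∀ ξ ∈ stdSimplex ℝ K,
      v δ ξ = sSup { r : ℝ | ∃ α ξs, IsSplit ξ α ξs ∧ r = splitPayoff M u δ (v δ) α ξs }

/-!
Taking the trivial split in the Bellman equation gives `(1 - δ) u ξ + δ v_δ (ξ M) ≤ v_δ ξ`.
Conversely, `v_δ` is the concavification, over countable splits, of the stage value
`(1 - δ) u + δ v_δ (· M)`, hence is itself concave: near-optimal splits of the posteriors of a
split compound into one split of the prior. Pushing a split of `ξ` forward by `M` gives a split
of `ξ M`, so concavity yields `v_δ ξ ≤ (1 - δ) C + δ v_δ (ξ M)`. Together,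
`|v_δ ξ - v_δ (ξ M)| ≤ (1 - δ) C ≤ (1 - δ) C / δ`.
-/

open Matrix

section

variable {K : Type*} [Fintype K]

lemma IsStochastic.vecMul_mem_stdSimplex {M : Matrix K K ℝ} (hM : IsStochastic M)
    {ξ : K → ℝ} (hξ : ξ ∈ stdSimplex ℝ K) : ξ ᵥ* M ∈ stdSimplex ℝ K := by
  classical
  have hM' : M ∈ rowStochastic ℝ K := mem_rowStochastic_iff_sum.2 hM
  refine ⟨nonneg_vecMul_of_mem_rowStochastic hM' hξ.1, ?_⟩
  rw [← dotProduct_one]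
  exact vecMul_dotProduct_one_eq_one_rowStochastic hM' (by rw [dotProduct_one, hξ.2])

lemma abs_apply_le_one_of_mem_stdSimplex {x : K → ℝ} (hx : x ∈ stdSimplex ℝ K) (ℓ : K) :
    |x ℓ| ≤ 1 :=
  abs_le.2 ⟨by linarith [hx.1 ℓ], stdSimplex.le_one ⟨x, hx⟩ ℓ⟩

lemma isSplit_single {ξ : K → ℝ} (hξ : ξ ∈ stdSimplex ℝ K) :
    IsSplit ξ (Pi.single 0 1) (fun _ => ξ) := by
  refine ⟨fun s => ?_, fun _ => hξ, ?_, fun ℓ => ?_⟩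
  · by_cases hs : s = 0 <;> simp [hs]
  · simp
  · rw [tsum_mul_right]
    simp

lemma tsum_single_mul (c : ℝ) : ∑' s, (Pi.single 0 1 : ℕ → ℝ) s * c = c := by
  rw [tsum_mul_right]
  simp

namespace IsSplit

variable {ξ : K → ℝ} {α : ℕ → ℝ} {ξs : ℕ → K → ℝ}

lemma summable (h : IsSplit ξ α ξs) : Summable α := by
  by_contra hs
  simpa [tsum_eq_zero_of_not_summable hs] using h.2.2.1

lemma summable_mul (h : IsSplit ξ α ξs) {f : ℕ → ℝ} {B : ℝ} (hf : ∀ s, |f s| ≤ B) :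
    Summable fun s => α s * f s :=
  (h.summable.mul_right B).of_norm_bounded fun s => by
    rw [Real.norm_eq_abs, abs_mul, abs_of_nonneg (h.1 s)]
    exact mul_le_mul_of_nonneg_left (hf s) (h.1 s)

lemma tsum_mul_le (h : IsSplit ξ α ξs) {g : (K → ℝ) → ℝ} {c : ℝ}
    (hs : Summable fun s => α s * g (ξs s)) (hg : ∀ x ∈ stdSimplex ℝ K, g x ≤ c) :
    ∑' s, α s * g (ξs s) ≤ c :=
  calc ∑' s, α s * g (ξs s) ≤ ∑' s, α s * c :=
        Summable.tsum_le_tsum (fun s => mul_le_mul_of_nonneg_left (hg _ (h.2.1 s)) (h.1 s)) hs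
          (h.summable.mul_right c)
    _ = c := by rw [tsum_mul_right, h.2.2.1, one_mul]

lemma abs_tsum_mul_le (h : IsSplit ξ α ξs) {g : (K → ℝ) → ℝ} {B : ℝ}
    (hg : ∀ x ∈ stdSimplex ℝ K, |g x| ≤ B) : |∑' s, α s * g (ξs s)| ≤ B := by
  have hs := h.summable_mul fun s => hg _ (h.2.1 s)
  have hneg : ∑' s, α s * (fun x => -g x) (ξs s) ≤ B :=
    h.tsum_mul_le (by simpa only [mul_neg] using hs.neg) fun x hx =>
      neg_le.1 (abs_le.1 (hg x hx)).1
  simp only [mul_neg, tsum_neg] at hneg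
  exact abs_le.2 ⟨by linarith, h.tsum_mul_le hs fun x hx => (abs_le.1 (hg x hx)).2⟩

lemma hasSum (h : IsSplit ξ α ξs) : HasSum (fun s => α s • ξs s) ξ := by
  refine Pi.hasSum.2 fun ℓ => ?_
  have hs := h.summable_mul fun s => abs_apply_le_one_of_mem_stdSimplex (h.2.1 s) ℓ
  simpa only [Pi.smul_apply, smul_eq_mul, h.2.2.2 ℓ] using hs.hasSum

lemma vecMul (h : IsSplit ξ α ξs) {M : Matrix K K ℝ} (hM : IsStochastic M) :
    IsSplit (ξ ᵥ* M) α (fun s => ξs s ᵥ* M) := by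
  refine ⟨h.1, fun s => hM.vecMul_mem_stdSimplex (h.2.1 s), h.2.2.1, fun ℓ => ?_⟩
  have hM := h.hasSum.map M.vecMulLinear M.vecMulLinear.continuous_of_finiteDimensional
  simpa only [Function.comp_def, vecMulLinear_apply, smul_vecMul, Pi.smul_apply, smul_eq_mul]
    using (Pi.hasSum.1 hM ℓ).tsum_eq

end IsSplit

def compoundWeights (β : ℕ → ℝ) (γ : ℕ → ℕ → ℝ) (n : ℕ) : ℝ :=
  β (Nat.unpair n).1 * γ (Nat.unpair n).1 (Nat.unpair n).2

def compoundBeliefs (ζ : ℕ → ℕ → K → ℝ) (n : ℕ) : K → ℝ :=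
  ζ (Nat.unpair n).1 (Nat.unpair n).2

section Compound

variable {η : K → ℝ} {β : ℕ → ℝ} {ηs : ℕ → K → ℝ} {γ : ℕ → ℕ → ℝ} {ζ : ℕ → ℕ → K → ℝ}

lemma IsSplit.summable_prod_mul (hβ : IsSplit η β ηs)
    (hγ : ∀ s, IsSplit (ηs s) (γ s) (ζ s)) : Summable fun p : ℕ × ℕ => β p.1 * γ p.1 p.2 := by
  refine (summable_prod_of_nonneg fun p => mul_nonneg (hβ.1 _) ((hγ _).1 _)).2
    ⟨fun s => (hγ s).summable.mul_left (β s), hβ.summable.congr fun s => ?_⟩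
  dsimp only
  rw [tsum_mul_left, (hγ s).2.2.1, mul_one]

lemma tsum_compoundWeights_mul (hβ : IsSplit η β ηs) (hγ : ∀ s, IsSplit (ηs s) (γ s) (ζ s))
    {g : (K → ℝ) → ℝ} {B : ℝ} (hg : ∀ x ∈ stdSimplex ℝ K, |g x| ≤ B) :
    ∑' n, compoundWeights β γ n * g (compoundBeliefs ζ n) =
      ∑' s, β s * ∑' t, γ s t * g (ζ s t) := by
  let f : ℕ × ℕ → ℝ := fun p => β p.1 * (γ p.1 p.2 * g (ζ p.1 p.2))
  have hf : Summable f :=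
    ((hβ.summable_prod_mul hγ).mul_right B).of_norm_bounded fun p => by
      dsimp only [f]
      have hw := mul_nonneg (hβ.1 p.1) ((hγ p.1).1 p.2)
      rw [Real.norm_eq_abs, ← mul_assoc, abs_mul, abs_of_nonneg hw]
      exact mul_le_mul_of_nonneg_left (hg _ ((hγ _).2.1 _)) hw
  have hslice : ∀ s, Summable fun t => f (s, t) := fun s =>
    ((hγ s).summable_mul fun t => hg _ ((hγ s).2.1 t)).mul_left (β s)
  calc ∑' n, compoundWeights β γ n * g (compoundBeliefs ζ n)
        = ∑' n, f (Nat.pairEquiv.symm n) := tsum_congr fun n => mul_assoc _ _ _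
    _ = ∑' s, ∑' t, f (s, t) := (Nat.pairEquiv.symm.tsum_eq f).trans (hf.tsum_prod' hslice)
    _ = ∑' s, β s * ∑' t, γ s t * g (ζ s t) := tsum_congr fun s => tsum_mul_left (a := β s)

lemma IsSplit.compound (hβ : IsSplit η β ηs) (hγ : ∀ s, IsSplit (ηs s) (γ s) (ζ s)) :
    IsSplit η (compoundWeights β γ) (compoundBeliefs ζ) := by
  refine ⟨fun n => mul_nonneg (hβ.1 _) ((hγ _).1 _), fun n => (hγ _).2.1 _, ?_, fun ℓ => ?_⟩
  · have h1 := tsum_compoundWeights_mul hβ hγ (g := fun _ => 1) fun _ _ => (abs_one).le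
    simp only [mul_one, (hγ _).2.2.1] at h1
    rw [h1, hβ.2.2.1]
  · have h1 := tsum_compoundWeights_mul hβ hγ (g := fun x => x ℓ)
      fun x hx => abs_apply_le_one_of_mem_stdSimplex hx ℓ
    simp only [(hγ _).2.2.2 ℓ] at h1
    rw [h1, hβ.2.2.2 ℓ]

end Compound

/-- `cav F` in the paper's notation. -/
def concavification (F : (K → ℝ) → ℝ) (ξ : K → ℝ) : ℝ :=
  sSup {r | ∃ α ξs, IsSplit ξ α ξs ∧ r = ∑' s, α s * F (ξs s)}

section Concavification

variable {F : (K → ℝ) → ℝ} {B : ℝ} {ξ : K → ℝ}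

lemma concavification_le (hξ : ξ ∈ stdSimplex ℝ K) {c : ℝ}
    (hc : ∀ α ξs, IsSplit ξ α ξs → ∑' s, α s * F (ξs s) ≤ c) : concavification F ξ ≤ c :=
  csSup_le ⟨_, _, _, isSplit_single hξ, rfl⟩ fun _ ⟨α, ξs, h, hr⟩ => hr ▸ hc α ξs h

lemma exists_lt_tsum_mul_of_lt_concavification (hξ : ξ ∈ stdSimplex ℝ K) {c : ℝ}
    (hc : c < concavification F ξ) : ∃ α ξs, IsSplit ξ α ξs ∧ c < ∑' s, α s * F (ξs s) := by
  obtain ⟨_, ⟨α, ξs, h, rfl⟩, hlt⟩ := exists_lt_of_lt_csSup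
    (s := {r | ∃ α ξs, IsSplit ξ α ξs ∧ r = ∑' s, α s * F (ξs s)})
    ⟨_, _, _, isSplit_single hξ, rfl⟩ hc
  exact ⟨α, ξs, h, hlt⟩

lemma IsSplit.tsum_mul_le_concavification {α : ℕ → ℝ} {ξs : ℕ → K → ℝ} (h : IsSplit ξ α ξs)
    (hF : ∀ x ∈ stdSimplex ℝ K, |F x| ≤ B) : ∑' s, α s * F (ξs s) ≤ concavification F ξ :=
  le_csSup ⟨B, fun _ ⟨_, _, h', hr⟩ => hr ▸ (abs_le.1 (h'.abs_tsum_mul_le hF)).2⟩ ⟨α, ξs, h, rfl⟩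

lemma le_concavification (hF : ∀ x ∈ stdSimplex ℝ K, |F x| ≤ B) (hξ : ξ ∈ stdSimplex ℝ K) :
    F ξ ≤ concavification F ξ := by
  simpa only [tsum_single_mul] using (isSplit_single hξ).tsum_mul_le_concavification hF

lemma abs_concavification_le (hF : ∀ x ∈ stdSimplex ℝ K, |F x| ≤ B)
    (hξ : ξ ∈ stdSimplex ℝ K) : |concavification F ξ| ≤ B :=
  abs_le.2 ⟨(abs_le.1 (hF ξ hξ)).1.trans (le_concavification hF hξ),
    concavification_le hξ fun _ _ h => (abs_le.1 (h.abs_tsum_mul_le hF)).2⟩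

/-- Near-optimal splits of the `ηs s` compound into a split of `η`. -/
lemma IsSplit.tsum_mul_concavification_le {η : K → ℝ} {β : ℕ → ℝ} {ηs : ℕ → K → ℝ}
    (hβ : IsSplit η β ηs) (hF : ∀ x ∈ stdSimplex ℝ K, |F x| ≤ B) :
    ∑' s, β s * concavification F (ηs s) ≤ concavification F η := by
  refine le_of_forall_pos_le_add fun ε hε => ?_
  have hnear : ∀ s, ∃ γ ζ, IsSplit (ηs s) γ ζ ∧
      concavification F (ηs s) - ε < ∑' t, γ t * F (ζ t) := fun s =>
    exists_lt_tsum_mul_of_lt_concavification (hβ.2.1 s) (sub_lt_self _ hε)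
  choose γ ζ hγ hlt using hnear
  have hpay : Summable fun s => β s * ∑' t, γ s t * F (ζ s t) :=
    hβ.summable_mul fun s => (hγ s).abs_tsum_mul_le hF
  have hcav : Summable fun s => β s * concavification F (ηs s) :=
    hβ.summable_mul fun s => abs_concavification_le hF (hβ.2.1 s)
  have hcompound : ∑' s, β s * ∑' t, γ s t * F (ζ s t) ≤ concavification F η := by
    rw [← tsum_compoundWeights_mul hβ hγ hF]
    exact (hβ.compound hγ).tsum_mul_le_concavification hF
  calc ∑' s, β s * concavification F (ηs s)
      ≤ ∑' s, (β s * ∑' t, γ s t * F (ζ s t) + β s * ε) :=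
        Summable.tsum_le_tsum (fun s => by nlinarith [hlt s, hβ.1 s]) hcav
          (hpay.add (hβ.summable.mul_right ε))
    _ = ∑' s, β s * ∑' t, γ s t * F (ζ s t) + ε := by
      rw [hpay.tsum_add (hβ.summable.mul_right ε), tsum_mul_right, hβ.2.2.1, one_mul]
    _ ≤ concavification F η + ε := by linarith

end Concavification

/-- `splitPayoff M u δ w α ξs` unfolds to `∑' s, α s * stageValue M u δ w (ξs s)`. -/
def stageValue (M : Matrix K K ℝ) (u : (K → ℝ) → ℝ) (δ : ℝ) (w : (K → ℝ) → ℝ)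
    (x : K → ℝ) : ℝ :=
  (1 - δ) * u x + δ * w (x ᵥ* M)

namespace IsValueFamily

variable {M : Matrix K K ℝ} {u : (K → ℝ) → ℝ} {C : ℝ} {v : ℝ → (K → ℝ) → ℝ} {δ : ℝ}

lemma eq_concavification (hv : IsValueFamily M u C v) (hδ : δ ∈ Set.Ico 0 1) {ξ : K → ℝ}
    (hξ : ξ ∈ stdSimplex ℝ K) : v δ ξ = concavification (stageValue M u δ (v δ)) ξ :=
  (hv δ hδ).2 ξ hξ

lemma abs_stageValue_le (hv : IsValueFamily M u C v) (hM : IsStochastic M)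
    (hu0 : ∀ x ∈ stdSimplex ℝ K, 0 ≤ u x) (huC : ∀ x ∈ stdSimplex ℝ K, u x ≤ C)
    (hδ : δ ∈ Set.Ico 0 1) : ∀ x ∈ stdSimplex ℝ K, |stageValue M u δ (v δ) x| ≤ C := by
  intro x hx
  obtain ⟨hw0, hwC⟩ := (hv δ hδ).1 _ (hM.vecMul_mem_stdSimplex hx)
  have hδ1 : 0 ≤ 1 - δ := by linarith [hδ.2]
  rw [stageValue, abs_le]
  constructor <;> nlinarith [hu0 x hx, huC x hx, hδ.1]

lemma stageValue_le (hv : IsValueFamily M u C v) (hM : IsStochastic M)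
    (hu0 : ∀ x ∈ stdSimplex ℝ K, 0 ≤ u x) (huC : ∀ x ∈ stdSimplex ℝ K, u x ≤ C)
    (hδ : δ ∈ Set.Ico 0 1) {ξ : K → ℝ} (hξ : ξ ∈ stdSimplex ℝ K) :
    stageValue M u δ (v δ) ξ ≤ v δ ξ :=
  hv.eq_concavification hδ hξ ▸ le_concavification (hv.abs_stageValue_le hM hu0 huC hδ) hξ

lemma tsum_mul_le_of_isSplit (hv : IsValueFamily M u C v) (hM : IsStochastic M)
    (hu0 : ∀ x ∈ stdSimplex ℝ K, 0 ≤ u x) (huC : ∀ x ∈ stdSimplex ℝ K, u x ≤ C)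
    (hδ : δ ∈ Set.Ico 0 1) {η : K → ℝ} {β : ℕ → ℝ} {ηs : ℕ → K → ℝ} (hβ : IsSplit η β ηs)
    (hη : η ∈ stdSimplex ℝ K) : ∑' s, β s * v δ (ηs s) ≤ v δ η := by
  rw [tsum_congr fun s => by rw [hv.eq_concavification hδ (hβ.2.1 s)],
    hv.eq_concavification hδ hη]
  exact hβ.tsum_mul_concavification_le (hv.abs_stageValue_le hM hu0 huC hδ)

lemma le_add_mul_vecMul (hv : IsValueFamily M u C v) (hM : IsStochastic M)
    (hu0 : ∀ x ∈ stdSimplex ℝ K, 0 ≤ u x) (huC : ∀ x ∈ stdSimplex ℝ K, u x ≤ C)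
    (hδ : δ ∈ Set.Ico 0 1) {ξ : K → ℝ} (hξ : ξ ∈ stdSimplex ℝ K) :
    v δ ξ ≤ (1 - δ) * C + δ * v δ (ξ ᵥ* M) := by
  rw [hv.eq_concavification hδ hξ]
  refine concavification_le hξ fun α ξs h => ?_
  have hu : Summable fun s => α s * u (ξs s) :=
    h.summable_mul fun s => by rw [abs_of_nonneg (hu0 _ (h.2.1 s))]; exact huC _ (h.2.1 s)
  have hw : Summable fun s => α s * v δ (ξs s ᵥ* M) :=
    h.summable_mul fun s => by
      obtain ⟨h0, hle⟩ := (hv δ hδ).1 _ (hM.vecMul_mem_stdSimplex (h.2.1 s))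
      rwa [abs_of_nonneg h0]
  have hsplit : ∑' s, α s * stageValue M u δ (v δ) (ξs s) =
      (1 - δ) * ∑' s, α s * u (ξs s) + δ * ∑' s, α s * v δ (ξs s ᵥ* M) := by
    rw [← tsum_mul_left, ← tsum_mul_left, ← (hu.mul_left _).tsum_add (hw.mul_left _)]
    exact tsum_congr fun s => by rw [stageValue]; ring
  rw [hsplit]
  gcongr
  · linarith [hδ.2]
  · exact h.tsum_mul_le hu huC
  · exact hδ.1
  · exact hv.tsum_mul_le_of_isSplit hM hu0 huC hδ (h.vecMul hM) (hM.vecMul_mem_stdSimplex hξ)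

lemma abs_sub_vecMul_le (hv : IsValueFamily M u C v) (hM : IsStochastic M)
    (hu0 : ∀ x ∈ stdSimplex ℝ K, 0 ≤ u x) (huC : ∀ x ∈ stdSimplex ℝ K, u x ≤ C)
    (hδ : δ ∈ Set.Ico 0 1) {ξ : K → ℝ} (hξ : ξ ∈ stdSimplex ℝ K) :
    |v δ ξ - v δ (ξ ᵥ* M)| ≤ (1 - δ) * C := by
  have hlow := hv.stageValue_le hM hu0 huC hδ hξ
  have hup := hv.le_add_mul_vecMul hM hu0 huC hδ hξ
  obtain ⟨hw0, hwC⟩ := (hv δ hδ).1 _ (hM.vecMul_mem_stdSimplex hξ)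
  have hδ1 : 0 ≤ 1 - δ := by linarith [hδ.2]
  rw [stageValue] at hlow
  exact abs_sub_le_iff.2 ⟨by nlinarith, by nlinarith [hu0 ξ hξ]⟩

end IsValueFamily

end

theorem markovian_persuasion_one_step_shift_bound_general
    {K : Type*} [Fintype K]
    (M : Matrix K K ℝ) (hM : IsStochastic M)
    (u : (K → ℝ) → ℝ) (hu0 : ∀ ξ ∈ stdSimplex ℝ K, 0 ≤ u ξ)
    (C : ℝ) (hC : IsLUB (u '' stdSimplex ℝ K) C)
    (v : ℝ → (K → ℝ) → ℝ) (hv : IsValueFamily M u C v) :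
    ∀ δ : ℝ, 0 < δ → δ < 1 →
      ∀ ξ ∈ stdSimplex ℝ K,
        |v δ ξ - v δ (Matrix.vecMul ξ M)| ≤ (1 - δ) * C / δ := by
  intro δ hδ0 hδ1 ξ hξ
  have hδ : δ ∈ Set.Ico 0 1 := ⟨hδ0.le, hδ1⟩
  have hC0 : 0 ≤ C := ((hv δ hδ).1 ξ hξ).1.trans ((hv δ hδ).1 ξ hξ).2
  exact (hv.abs_sub_vecMul_le hM hu0 (fun x hx => hC.1 ⟨x, hx, rfl⟩) hδ hξ).trans
    (le_div_self (mul_nonneg (by linarith) hC0) hδ0 hδ1.le)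

theorem markovian_persuasion_one_step_shift_bound
    {K : Type*} [Fintype K] [Nonempty K]
    (M : Matrix K K ℝ) (hM : IsStochastic M)
    (u : (K → ℝ) → ℝ) (hu0 : ∀ ξ ∈ stdSimplex ℝ K, 0 ≤ u ξ)
    (husc : UpperSemicontinuousOn u (stdSimplex ℝ K))
    (C : ℝ) (hC : IsLUB (u '' stdSimplex ℝ K) C)
    (v : ℝ → (K → ℝ) → ℝ) (hv : IsValueFamily M u C v) :
    ∀ δ : ℝ, 0 < δ → δ < 1 →
      ∀ ξ ∈ stdSimplex ℝ K,
        |v δ ξ - v δ (Matrix.vecMul ξ M)| ≤ (1 - δ) * C / δ :=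
  markovian_persuasion_one_step_shift_bound_general M hM u hu0 C hC v hv
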